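/- arXiv:2405.07618 — 2 statements merged into one kernel-verified Lean document; each statement's English description precedes it below -/
import Mathlib

section
/- As |z| → ∞ with z ∈ T_B, the quantity |ρ(z, 𝐢)| tends to infinity; that is, for every M > 0 there exists R > 0 such that for all z ∈ T_B with |z| > R one has |ρ(z, 𝐢)| > M. -/
/- We model ℂ^(n+1) (the paper's ℂⁿ with n := n+1) as (Fin n → ℂ) × ℂ,
   writing z = (z', z_n).  All occurrences of the paper's dimension `n`
   therefore become `n + 1` below. -/

noncomputable section

open MeasureTheory Complex Set

/-- The ambient space ℂ^(n+1), split as (z', z_n). -/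
abbrev TubeC (n : ℕ) := (Fin n → ℂ) × ℂ

/-- ρ(z,w) = (1/4)((z'-conj w')·(z'-conj w') - 2i(z_n - conj w_n)). -/
def rhoK {n : ℕ} (z w : TubeC n) : ℂ :=
  (1/4 : ℂ) * ((∑ j, (z.1 j - (starRingEnd ℂ) (w.1 j)) ^ 2)
    - 2 * Complex.I * (z.2 - (starRingEnd ℂ) w.2))

/-- ρ(z) = Im z_n - |Im z'|². -/
def rhoR {n : ℕ} (z : TubeC n) : ℝ := z.2.im - ∑ j, (z.1 j).im ^ 2

/-- The tube domain T_B. -/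
def TB (n : ℕ) : Set (TubeC n) := {z | ∑ j, (z.1 j).im ^ 2 < z.2.im}

/-- Inverse hyperbolic tangent. -/
def artanh (x : ℝ) : ℝ := (1/2) * Real.log ((1 + x) / (1 - x))

/-- The Bergman distance on T_B. -/
def betaB {n : ℕ} (z w : TubeC n) : ℝ :=
  artanh (Real.sqrt (1 - rhoR z * rhoR w / (‖rhoK z w‖) ^ 2))

/-- The Bergman metric ball D(z,r). -/
def DB {n : ℕ} (z : TubeC n) (r : ℝ) : Set (TubeC n) := {w ∈ TB n | betaB z w < r}

/-- Euclidean norm of a point of ℂ^(n+1). -/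
def euclidNorm {n : ℕ} (z : TubeC n) : ℝ :=
  Real.sqrt ((∑ j, ‖z.1 j‖ ^ 2) + ‖z.2‖ ^ 2)

/-- The point 𝐢 = (0', i). -/
def iPt (n : ℕ) : TubeC n := (0, Complex.I)

/-! With `w = 4 ρ(z, 𝐢) = ∑ z_j² - 2i z_n + 2`, the defining inequality of `T_B` gives
`Re w ≥ ∑ |z_j|² + 2`, and then `2 i z_n = ∑ z_j² + 2 - w` gives `|z_n| ≤ |w|`.
Hence `|z|² ≤ |w| + |w|²`, so `|ρ(z, 𝐢)|` is large when `|z|` is. -/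

theorem four_mul_rhoK_iPt {n : ℕ} (z : TubeC n) :
    4 * rhoK z (iPt n) = ∑ j, z.1 j ^ 2 - 2 * I * z.2 + 2 := by
  simp only [rhoK, iPt, Pi.zero_apply, map_zero, sub_zero, conj_I]
  linear_combination (-2 : ℂ) * I_sq

theorem norm_sum_sq_le_sum_sq_norm {ι : Type*} (s : Finset ι) (a : ι → ℂ) :
    ‖∑ j ∈ s, a j ^ 2‖ ≤ ∑ j ∈ s, ‖a j‖ ^ 2 :=
  (norm_sum_le _ _).trans_eq (by simp only [norm_pow])

theorem sum_sq_norm_add_two_le_re_four_mul_rhoK {n : ℕ} {z : TubeC n} (hz : z ∈ TB n) :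
    ∑ j, ‖z.1 j‖ ^ 2 + 2 ≤ (4 * rhoK z (iPt n)).re := by
  have hre : (4 * rhoK z (iPt n)).re
      = ∑ j, ((z.1 j).re ^ 2 - (z.1 j).im ^ 2) + 2 * z.2.im + 2 := by
    rw [four_mul_rhoK_iPt]
    simp [re_sum, sq]
  have hnorm : ∑ j, ‖z.1 j‖ ^ 2 = ∑ j, ((z.1 j).re ^ 2 + (z.1 j).im ^ 2) := by
    refine Finset.sum_congr rfl fun j _ => ?_
    rw [Complex.sq_norm, normSq_apply]
    ring
  have hTB : ∑ j, (z.1 j).im ^ 2 < z.2.im := hz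
  rw [hre, hnorm, Finset.sum_add_distrib, Finset.sum_sub_distrib]
  linarith

theorem sum_sq_norm_add_two_le_norm_four_mul_rhoK {n : ℕ} {z : TubeC n} (hz : z ∈ TB n) :
    ∑ j, ‖z.1 j‖ ^ 2 + 2 ≤ ‖4 * rhoK z (iPt n)‖ :=
  (sum_sq_norm_add_two_le_re_four_mul_rhoK hz).trans (re_le_norm _)

theorem norm_snd_le_norm_four_mul_rhoK {n : ℕ} {z : TubeC n} (hz : z ∈ TB n) :
    ‖z.2‖ ≤ ‖4 * rhoK z (iPt n)‖ := by
  set w := 4 * rhoK z (iPt n) with hw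
  have hzn : 2 * I * z.2 = ∑ j, z.1 j ^ 2 + 2 - w := by
    rw [hw, four_mul_rhoK_iPt]
    ring
  have hnorm : 2 * ‖z.2‖ = ‖∑ j, z.1 j ^ 2 + 2 - w‖ := by
    rw [← hzn]
    simp
  have htwice : 2 * ‖z.2‖ ≤ 2 * ‖w‖ := calc
    2 * ‖z.2‖ ≤ ‖∑ j, z.1 j ^ 2‖ + ‖(2 : ℂ)‖ + ‖w‖ := by
      rw [hnorm]
      exact (norm_sub_le _ _).trans (by gcongr; exact norm_add_le _ _)
    _ ≤ ∑ j, ‖z.1 j‖ ^ 2 + 2 + ‖w‖ := by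
      rw [Complex.norm_two]
      gcongr
      exact norm_sum_sq_le_sum_sq_norm _ _
    _ ≤ 2 * ‖w‖ := by linarith [sum_sq_norm_add_two_le_norm_four_mul_rhoK hz]
  linarith

theorem euclidNorm_sq_le_of_mem_TB {n : ℕ} {z : TubeC n} (hz : z ∈ TB n) :
    euclidNorm z ^ 2 ≤ ‖4 * rhoK z (iPt n)‖ + ‖4 * rhoK z (iPt n)‖ ^ 2 := by
  have hsq : euclidNorm z ^ 2 = ∑ j, ‖z.1 j‖ ^ 2 + ‖z.2‖ ^ 2 :=
    Real.sq_sqrt (by positivity)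
  have hzn := norm_snd_le_norm_four_mul_rhoK hz
  rw [hsq]
  gcongr
  linarith [sum_sq_norm_add_two_le_norm_four_mul_rhoK hz]

/-- |ρ(z,𝐢)| → ∞ as |z| → ∞ within T_B. -/
theorem stmt_4 (n : ℕ) :
    ∀ M > (0 : ℝ), ∃ R > (0 : ℝ), ∀ z ∈ TB n,
      euclidNorm z > R → ‖rhoK z (iPt n)‖ > M := by
  intro M hM
  refine ⟨√(4 * M + (4 * M) ^ 2), by positivity, fun z hz hR => ?_⟩
  by_contra! hle
  have hw : ‖4 * rhoK z (iPt n)‖ ≤ 4 * M := by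
    rw [norm_mul, norm_ofNat]
    linarith
  have hbound : euclidNorm z ≤ √(4 * M + (4 * M) ^ 2) := by
    refine Real.le_sqrt_of_sq_le ((euclidNorm_sq_le_of_mem_TB hz).trans ?_)
    gcongr
  linarith
end
end

section
/- (Khinchine's inequality) For each 0 < p < ∞ there exist constants 0 < A_p ≤ B_p < ∞ such that for every m ∈ ℕ and all complex numbers c₁, …, c_m, A_p (Σ_{j=1}^m |c_j|²)^{p/2} ≤ ∫_0^1 |Σ_{j=1}^m c_j r_j(t)|^p dt ≤ B_p (Σ_{j=1}^m |c_j|²)^{p/2}, where r_j are the Rademacher functions. -/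
/- We model ℂ^(n+1) (the paper's ℂⁿ with n := n+1) as (Fin n → ℂ) × ℂ,
   writing z = (z', z_n).  All occurrences of the paper's dimension `n`
   therefore become `n + 1` below. -/

noncomputable section

open MeasureTheory Complex Set

/-- The Rademacher functions: r₀(t) = 1 if 0 ≤ t - ⌊t⌋ < 1/2, -1 otherwise;
r_j(t) = r₀(2^j t). -/
def rademacher (j : ℕ) (t : ℝ) : ℝ :=
  if Int.fract ((2 : ℝ) ^ j * t) < 1 / 2 then 1 else -1

/-
Averaging `F (r₁(t), …, r_m(t))` over `t ∈ [0, 1]` is the same as averaging `F` over the `2ᵐ`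
sign vectors `ε ∈ {±1}ᵐ`: on `[0, 1/2)` and `[1/2, 1)` the first function `r₀` is constant, and
`r_{j+1}(t) = r_j(2t)` together with `1`-periodicity rescales each half onto `[0, 1]`.

On the cube, the parallelogram law gives `𝔼 ‖∑ εⱼ cⱼ‖² = ∑ ‖cⱼ‖²`, and
`𝔼 cosh (∑ εⱼ aⱼ) = ∏ cosh aⱼ ≤ exp (∑ aⱼ² / 2)` bounds all even moments of the real and imaginary
parts. By homogeneity we may assume `∑ ‖cⱼ‖² = 1`. Then `tᵖ ≤ 1 + t²ᵏ` for `p ≤ 2k` gives the upper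
bound; the lower bound is Jensen's inequality `1 = (𝔼 X²)^(p/2) ≤ 𝔼 Xᵖ` for `p ≥ 2`, and
Cauchy–Schwarz `1 = (𝔼 X²)² ≤ 𝔼 Xᵖ · 𝔼 X⁴⁻ᵖ ≤ 𝔼 Xᵖ (1 + 𝔼 X⁴)` for `p < 2`.
-/

open Finset Function intervalIntegral
open scoped BigOperators

lemma Fintype.expect_bool {K : Type*} [Semifield K] [CharZero K] (f : Bool → K) :
    𝔼 b, f b = (f true + f false) / 2 := by
  rw [Fintype.expect_eq_sum_div_card, Fintype.sum_bool, Fintype.card_bool]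
  norm_num

lemma Finset.rpow_expect_le_expect_rpow {ι : Type*} {s : Finset ι} (hs : s.Nonempty) {z : ι → ℝ}
    (hz : ∀ i ∈ s, 0 ≤ z i) {q : ℝ} (hq : 1 ≤ q) : (𝔼 i ∈ s, z i) ^ q ≤ 𝔼 i ∈ s, z i ^ q := by
  simp only [expect_eq_sum_div_card, div_eq_inv_mul, mul_sum]
  exact Real.rpow_arith_mean_le_arith_mean_rpow s (fun _ => (#s : ℝ)⁻¹) z
    (fun _ _ => by positivity) (by simp [card_ne_zero.2 hs]) hz hq

lemma Real.rpow_le_one_add_rpow {t p q : ℝ} (ht : 0 ≤ t) (hp : 0 ≤ p) (hpq : p ≤ q) :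
    t ^ p ≤ 1 + t ^ q := by
  rcases le_total t 1 with h | h
  · linarith [Real.rpow_le_one ht h hp, Real.rpow_nonneg ht q]
  · linarith [Real.rpow_le_rpow_of_exponent_le h hpq]

lemma Real.pow_two_mul_le_factorial_mul_cosh (x : ℝ) (k : ℕ) :
    x ^ (2 * k) ≤ 2 * (2 * k).factorial * Real.cosh x := by
  have hexp : |x| ^ (2 * k) / (2 * k).factorial ≤ Real.exp |x| :=
    Real.pow_div_factorial_le_exp _ (abs_nonneg x) _
  have hcosh : Real.exp |x| ≤ 2 * Real.cosh x := by
    rw [← Real.cosh_abs, Real.cosh_eq]; linarith [Real.exp_pos (-|x|)]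
  rw [div_le_iff₀ (by positivity)] at hexp
  rw [← (even_two_mul k).pow_abs]
  nlinarith [(Nat.factorial_pos (2 * k)).le]

def signVec {m : ℕ} (b : Fin m → Bool) : Fin m → ℝ := fun j => if b j then -1 else 1

lemma signVec_cons {m : ℕ} (x : Bool) (b : Fin m → Bool) :
    signVec (Fin.cons x b : Fin (m + 1) → Bool) = Fin.cons (if x then -1 else 1) (signVec b) := by
  ext j
  refine Fin.cases ?_ (fun i => ?_) j <;> simp [signVec]

lemma expect_signVec_succ {m : ℕ} (F : (Fin (m + 1) → ℝ) → ℝ) :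
    𝔼 b, F (signVec b) =
      (𝔼 b, F (Fin.cons 1 (signVec b)) + 𝔼 b, F (Fin.cons (-1) (signVec b))) / 2 := by
  rw [← Fintype.expect_equiv (Fin.consEquiv fun _ => Bool) (fun x => F (signVec (Fin.cons x.1 x.2)))
    _ (fun _ => rfl), ← univ_product_univ, expect_product, expect_comm, ← expect_add_distrib,
    expect_div]
  simp only [signVec_cons, Fintype.expect_bool]
  simp [add_comm]

lemma expect_signVec_sum_succ {E : Type*} [AddCommGroup E] [Module ℝ E] {m : ℕ} (G : E → ℝ)
    (c : Fin (m + 1) → E) :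
    𝔼 b, G (∑ j, signVec b j • c j) =
      𝔼 b, (G (∑ j, signVec b j • c j.succ + c 0) + G (∑ j, signVec b j • c j.succ - c 0)) / 2 := by
  rw [expect_signVec_succ (fun v => G (∑ j, v j • c j)), ← expect_add_distrib, ← expect_div]
  simp only [Fin.sum_univ_succ, Fin.cons_zero, Fin.cons_succ, one_smul, neg_one_smul,
    add_comm (c 0), neg_add_eq_sub]

def radVec (m : ℕ) (t : ℝ) : Fin m → ℝ := fun j => rademacher j t

lemma rademacher_succ (j : ℕ) (t : ℝ) : rademacher (j + 1) t = rademacher j (2 * t) := by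
  simp only [rademacher, pow_succ, mul_assoc]

lemma rademacher_periodic (j : ℕ) : Periodic (rademacher j) 1 := by
  intro t
  have h : (2 : ℝ) ^ j * (t + 1) = 2 ^ j * t + ((2 ^ j : ℕ) : ℝ) := by push_cast; ring
  simp only [rademacher, h, Int.fract_add_natCast]

lemma radVec_periodic (m : ℕ) : Periodic (radVec m) 1 :=
  fun t => funext fun j => rademacher_periodic j t

lemma rademacher_zero_of_mem_Ico_zero_half {t : ℝ} (ht : t ∈ Set.Ico 0 (1 / 2)) :
    rademacher 0 t = 1 := by
  have : Int.fract t = t := Int.fract_eq_self.2 ⟨ht.1, by linarith [ht.2]⟩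
  rw [rademacher, pow_zero, one_mul, this, if_pos ht.2]

lemma rademacher_zero_of_mem_Ico_half_one {t : ℝ} (ht : t ∈ Set.Ico (1 / 2) 1) :
    rademacher 0 t = -1 := by
  have : Int.fract t = t := Int.fract_eq_self.2 ⟨by linarith [ht.1], ht.2⟩
  rw [rademacher, pow_zero, one_mul, this, if_neg (not_lt.2 ht.1)]

lemma measurable_rademacher (j : ℕ) : Measurable (rademacher j) :=
  Measurable.ite (measurableSet_lt (measurable_fract.comp (measurable_const_mul _))
    measurable_const) measurable_const measurable_const

lemma rademacher_mem_Icc (j : ℕ) (t : ℝ) : rademacher j t ∈ Set.Icc (-1) 1 := by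
  unfold rademacher; split_ifs <;> norm_num

lemma radVec_succ (m : ℕ) (t : ℝ) :
    radVec (m + 1) t = Fin.cons (rademacher 0 t) (radVec m (2 * t)) := by
  ext j
  refine Fin.cases rfl (fun i => ?_) j
  simp [radVec, rademacher_succ]

lemma Continuous.intervalIntegrable_comp_radVec {m : ℕ} {F : (Fin m → ℝ) → ℝ}
    (hF : Continuous F) (a b : ℝ) : IntervalIntegrable (fun t => F (radVec m t)) volume a b := by
  have hmeas : Measurable fun t => F (radVec m t) :=
    hF.measurable.comp (measurable_pi_lambda _ fun j => measurable_rademacher j)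
  obtain ⟨M, hM⟩ := (isCompact_univ_pi fun _ => isCompact_Icc (a := (-1 : ℝ)) (b := 1)
    ).exists_bound_of_continuousOn hF.continuousOn
  exact intervalIntegrable_iff.2 (Measure.integrableOn_of_bounded measure_Ioc_lt_top.ne
    hmeas.aestronglyMeasurable (M := M)
    (ae_of_all _ fun t => hM _ fun j _ => rademacher_mem_Icc j t))

lemma integral_zero_half_comp_two_mul (g : ℝ → ℝ) :
    ∫ t in (0 : ℝ)..1 / 2, g (2 * t) = (∫ t in (0 : ℝ)..1, g t) / 2 := by
  rw [integral_comp_mul_left _ two_ne_zero]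
  norm_num [div_eq_inv_mul]

lemma Function.Periodic.integral_half_one_comp_two_mul {g : ℝ → ℝ} (hg : Periodic g 1) :
    ∫ t in (1 / 2 : ℝ)..1, g (2 * t) = (∫ t in (0 : ℝ)..1, g t) / 2 := by
  rw [integral_comp_mul_left _ two_ne_zero]
  have := hg.intervalIntegral_add_eq 1 0
  norm_num at this ⊢
  rw [this]
  ring

lemma integral_comp_radVec_succ {m : ℕ} {F : (Fin (m + 1) → ℝ) → ℝ} (hF : Continuous F) :
    ∫ t in (0 : ℝ)..1, F (radVec (m + 1) t) =
      ((∫ t in (0 : ℝ)..1, F (Fin.cons 1 (radVec m t))) +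
        ∫ t in (0 : ℝ)..1, F (Fin.cons (-1) (radVec m t))) / 2 := by
  have hper : Periodic (fun t => F (Fin.cons (-1) (radVec m t))) 1 :=
    (radVec_periodic m).comp fun v => F (Fin.cons (-1) v)
  rw [← integral_add_adjacent_intervals (b := 1 / 2) (hF.intervalIntegrable_comp_radVec _ _)
      (hF.intervalIntegrable_comp_radVec _ _), _root_.add_div,
    ← integral_zero_half_comp_two_mul,
    ← hper.integral_half_one_comp_two_mul]
  congr 1 <;> refine integral_congr_uIoo fun t ht => ?_ <;>
    rw [uIoo_of_le (by norm_num)] at ht <;> simp only [radVec_succ]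
  · rw [rademacher_zero_of_mem_Ico_zero_half (Set.Ioo_subset_Ico_self ht)]
  · rw [rademacher_zero_of_mem_Ico_half_one (Set.Ioo_subset_Ico_self ht)]

lemma integral_comp_radVec {m : ℕ} {F : (Fin m → ℝ) → ℝ} (hF : Continuous F) :
    ∫ t in (0 : ℝ)..1, F (radVec m t) = 𝔼 b, F (signVec b) := by
  induction m with
  | zero =>
    have h (t : ℝ) (b : Fin 0 → Bool) : radVec 0 t = signVec b := Subsingleton.elim _ _
    simp_rw [h _ default, ← h 0]
    simp
  | succ m ih =>
    have hcons (x : ℝ) : Continuous fun v : Fin m → ℝ => F (Fin.cons x v) :=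
      hF.comp (continuous_const.finCons continuous_id)
    rw [integral_comp_radVec_succ hF, expect_signVec_succ, ih (hcons 1), ih (hcons (-1))]

-- `r₁, …, r_m` is the tail of `r₀, …, r_m`, and the unused first sign averages out.
lemma integral_comp_rademacher_succ {m : ℕ} {F : (Fin m → ℝ) → ℝ} (hF : Continuous F) :
    ∫ t in (0 : ℝ)..1, F (fun j => rademacher (j + 1) t) = 𝔼 b, F (signVec b) := by
  have h := integral_comp_radVec (F := fun v : Fin (m + 1) → ℝ => F (Fin.tail v))
    (hF.comp (continuous_pi fun j => continuous_apply _))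
  rw [expect_signVec_succ (fun v => F (Fin.tail v))] at h
  simp only [Fin.tail_cons, add_self_div_two] at h
  exact h

section SignMoment

variable {E : Type*} [NormedAddCommGroup E] {m : ℕ}

def signMoment [Module ℝ E] (p : ℝ) (c : Fin m → E) : ℝ :=
  𝔼 b, ‖∑ j, signVec b j • c j‖ ^ p

lemma signMoment_nonneg [Module ℝ E] (p : ℝ) (c : Fin m → E) : 0 ≤ signMoment p c :=
  expect_nonneg fun _ _ => by positivity

lemma signMoment_two [InnerProductSpace ℝ E] (c : Fin m → E) :
    signMoment 2 c = ∑ j, ‖c j‖ ^ 2 := by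
  simp only [signMoment, Real.rpow_two]
  induction m with
  | zero => simp
  | succ m ih =>
    have hpar (x y : E) : (‖x + y‖ ^ 2 + ‖x - y‖ ^ 2) / 2 = ‖x‖ ^ 2 + ‖y‖ ^ 2 := by
      rw [parallelogram_law_with_norm ℝ]; ring
    rw [expect_signVec_sum_succ (‖·‖ ^ 2)]
    simp only [hpar, expect_add_distrib, ih, Fintype.expect_const, Fin.sum_univ_succ]
    ring

lemma signMoment_le_one_add [Module ℝ E] (c : Fin m → E) {p q : ℝ} (hp : 0 ≤ p) (hpq : p ≤ q) :
    signMoment p c ≤ 1 + signMoment q c := by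
  unfold signMoment
  rw [← Fintype.expect_const (ι := Fin m → Bool) (1 : ℝ), ← expect_add_distrib]
  exact expect_le_expect fun b _ => Real.rpow_le_one_add_rpow (norm_nonneg _) hp hpq

lemma signMoment_rpow_le [Module ℝ E] (c : Fin m → E) {p q : ℝ} (hp : 0 < p) (hpq : p ≤ q) :
    signMoment p c ^ (q / p) ≤ signMoment q c := by
  refine (rpow_expect_le_expect_rpow univ_nonempty (fun _ _ => by positivity)
    ((one_le_div hp).2 hpq)).trans_eq (expect_congr rfl fun b _ => ?_)
  rw [← Real.rpow_mul (norm_nonneg _), mul_div_cancel₀ _ hp.ne']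

lemma sq_signMoment_two_le [Module ℝ E] (c : Fin m → E) (p : ℝ) :
    signMoment 2 c ^ 2 ≤ signMoment p c * signMoment (4 - p) c := by
  have hsplit (x : ℝ) (hx : 0 ≤ x) : x ^ (2 : ℝ) = x ^ (p / 2) * x ^ (2 - p / 2) := by
    rw [← Real.rpow_add' hx (by norm_num)]; ring_nf
  have hsq (x r : ℝ) (hx : 0 ≤ x) : (x ^ r) ^ 2 = x ^ (r * 2) := by
    exact_mod_cast (Real.rpow_mul_natCast hx r 2).symm
  calc signMoment 2 c ^ 2
      = (𝔼 b, ‖∑ j, signVec b j • c j‖ ^ (p / 2) * ‖∑ j, signVec b j • c j‖ ^ (2 - p / 2)) ^ 2 := by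
        simp only [signMoment, hsplit _ (norm_nonneg _)]
    _ ≤ (𝔼 b, (‖∑ j, signVec b j • c j‖ ^ (p / 2)) ^ 2) *
          𝔼 b, (‖∑ j, signVec b j • c j‖ ^ (2 - p / 2)) ^ 2 :=
        expect_mul_sq_le_sq_mul_sq _ _ _
    _ = signMoment p c * signMoment (4 - p) c := by
        simp only [signMoment, hsq _ _ (norm_nonneg _)]
        ring_nf

lemma signMoment_smul [NormedSpace ℝ E] (p r : ℝ) (c : Fin m → E) :
    signMoment p (r • c) = |r| ^ p * signMoment p c := by
  simp only [signMoment, Pi.smul_apply, smul_comm _ r, ← smul_sum, norm_smul, Real.norm_eq_abs,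
    Real.mul_rpow (abs_nonneg _) (norm_nonneg _), mul_expect]

lemma signMoment_of_sum_sq_eq_zero [Module ℝ E] {p : ℝ} (hp : p ≠ 0) {c : Fin m → E}
    (hc : ∑ j, ‖c j‖ ^ 2 = 0) : signMoment p c = 0 := by
  have : c = 0 := funext fun j => by
    simpa using (sum_eq_zero_iff_of_nonneg fun _ _ => by positivity).1 hc j (mem_univ _)
  simp [signMoment, this, Real.zero_rpow hp]

lemma exists_signMoment_eq_mul [NormedSpace ℝ E] (p : ℝ) {c : Fin m → E}
    (hc : ∑ j, ‖c j‖ ^ 2 ≠ 0) :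
    ∃ c' : Fin m → E, ∑ j, ‖c' j‖ ^ 2 = 1 ∧
      signMoment p c = (∑ j, ‖c j‖ ^ 2) ^ (p / 2) * signMoment p c' := by
  set S := ∑ j, ‖c j‖ ^ 2
  have hS : 0 < S := lt_of_le_of_ne (by positivity) (Ne.symm hc)
  have hsqrt : 0 < √S := Real.sqrt_pos.2 hS
  refine ⟨(√S)⁻¹ • c, ?_, ?_⟩
  · simp only [Pi.smul_apply, norm_smul, mul_pow, norm_inv, Real.norm_eq_abs, abs_of_pos hsqrt,
      inv_pow, Real.sq_sqrt hS.le, ← mul_sum]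
    exact inv_mul_cancel₀ hc
  · conv_lhs => rw [← smul_inv_smul₀ hsqrt.ne' c]
    rw [signMoment_smul, abs_of_pos hsqrt, Real.sqrt_eq_rpow, ← Real.rpow_mul hS.le]
    ring_nf

end SignMoment

lemma expect_cosh_signVec_sum {m : ℕ} (a : Fin m → ℝ) :
    𝔼 b, Real.cosh (∑ j, signVec b j • a j) = ∏ j, Real.cosh (a j) := by
  induction m with
  | zero => simp
  | succ m ih =>
    have hcosh (x y : ℝ) :
        (Real.cosh (x + y) + Real.cosh (x - y)) / 2 = Real.cosh y * Real.cosh x := by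
      rw [Real.cosh_add, Real.cosh_sub]; ring
    rw [expect_signVec_sum_succ Real.cosh]
    simp only [hcosh, ← mul_expect, ih, Fin.prod_univ_succ]

lemma expect_pow_signVec_sum_le {m : ℕ} (a : Fin m → ℝ) (k : ℕ) :
    𝔼 b, (∑ j, signVec b j • a j) ^ (2 * k) ≤
      2 * (2 * k).factorial * Real.exp (∑ j, a j ^ 2 / 2) :=
  calc 𝔼 b, (∑ j, signVec b j • a j) ^ (2 * k)
      ≤ 𝔼 b, 2 * (2 * k).factorial * Real.cosh (∑ j, signVec b j • a j) :=
        expect_le_expect fun _ _ => Real.pow_two_mul_le_factorial_mul_cosh _ _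
    _ = 2 * (2 * k).factorial * ∏ j, Real.cosh (a j) := by
        rw [← mul_expect, expect_cosh_signVec_sum]
    _ ≤ 2 * (2 * k).factorial * ∏ j, Real.exp (a j ^ 2 / 2) := by
        gcongr with j
        exact Real.cosh_le_exp_half_sq _
    _ = 2 * (2 * k).factorial * Real.exp (∑ j, a j ^ 2 / 2) := by rw [Real.exp_sum]

-- `2 ^ (k - 1)` comes from splitting `‖z‖²ᵏ` into real and imaginary parts, and each part
-- contributes `2 (2k)! e^(1/2)` by `expect_pow_signVec_sum_le`.
def evenMomentBound (k : ℕ) : ℝ := 2 ^ (k - 1) * (4 * (2 * k).factorial * Real.exp (1 / 2))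

lemma evenMomentBound_nonneg (k : ℕ) : 0 ≤ evenMomentBound k := by
  unfold evenMomentBound; positivity

lemma signMoment_two_mul_le {m : ℕ} (c : Fin m → ℂ) (hc : ∑ j, ‖c j‖ ^ 2 ≤ 1) (k : ℕ) :
    signMoment (2 * k) c ≤ evenMomentBound k := by
  have hsq (f : ℂ → ℝ) (hf : ∀ z, |f z| ≤ ‖z‖) : ∑ j, f (c j) ^ 2 / 2 ≤ 1 / 2 := by
    rw [← sum_div]
    gcongr
    refine le_trans (sum_le_sum fun j _ => ?_) hc
    rw [← sq_abs]
    exact pow_le_pow_left₀ (abs_nonneg _) (hf _) 2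
  have hnorm (z : ℂ) : ‖z‖ ^ (2 * k) ≤ 2 ^ (k - 1) * (z.re ^ (2 * k) + z.im ^ (2 * k)) := by
    rw [pow_mul, pow_mul, pow_mul, Complex.sq_norm, Complex.normSq_apply, ← sq, ← sq]
    exact add_pow_le (sq_nonneg _) (sq_nonneg _) k
  calc signMoment (2 * k) c
      = 𝔼 b, ‖∑ j, signVec b j • c j‖ ^ (2 * k) := by
        simp only [signMoment, ← Real.rpow_natCast]; push_cast; rfl
    _ ≤ 𝔼 b, 2 ^ (k - 1) * ((∑ j, signVec b j • (c j).re) ^ (2 * k) +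
          (∑ j, signVec b j • (c j).im) ^ (2 * k)) := by
        refine expect_le_expect fun b _ => (hnorm _).trans_eq ?_
        simp only [Complex.re_sum, Complex.im_sum, Complex.smul_re, Complex.smul_im]
    _ ≤ 2 ^ (k - 1) * (2 * (2 * k).factorial * Real.exp (1 / 2) +
          2 * (2 * k).factorial * Real.exp (1 / 2)) := by
        rw [← mul_expect, expect_add_distrib]
        gcongr
        · exact (expect_pow_signVec_sum_le _ k).trans
            (by gcongr; exact hsq _ Complex.abs_re_le_norm)
        · exact (expect_pow_signVec_sum_le _ k).trans
            (by gcongr; exact hsq _ Complex.abs_im_le_norm)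
    _ = evenMomentBound k := by rw [evenMomentBound]; ring

lemma signMoment_le_one_add_evenMomentBound {m : ℕ} (c : Fin m → ℂ) (hc : ∑ j, ‖c j‖ ^ 2 ≤ 1)
    {p : ℝ} {k : ℕ} (hp : 0 ≤ p) (hpk : p ≤ 2 * k) : signMoment p c ≤ 1 + evenMomentBound k :=
  (signMoment_le_one_add c hp hpk).trans (by gcongr; exact signMoment_two_mul_le c hc k)

lemma inv_one_add_evenMomentBound_le_signMoment {m : ℕ} (c : Fin m → ℂ)
    (hc : ∑ j, ‖c j‖ ^ 2 = 1) {p : ℝ} (hp : 0 < p) :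
    (1 + evenMomentBound 2)⁻¹ ≤ signMoment p c := by
  have hM := evenMomentBound_nonneg 2
  have h2 : signMoment 2 c = 1 := (signMoment_two c).trans hc
  rcases le_total 2 p with hp2 | hp2
  · have h := signMoment_rpow_le c two_pos hp2
    rw [h2, Real.one_rpow] at h
    exact (inv_le_one_of_one_le₀ (by linarith)).trans h
  · rw [inv_le_iff_one_le_mul₀ (by linarith)]
    calc 1 = signMoment 2 c ^ 2 := by rw [h2, one_pow]
      _ ≤ signMoment p c * signMoment (4 - p) c := sq_signMoment_two_le c p
      _ ≤ signMoment p c * (1 + evenMomentBound 2) := by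
          gcongr
          · exact signMoment_nonneg p c
          · exact signMoment_le_one_add_evenMomentBound c hc.le (by linarith)
              (by push_cast; linarith)

theorem khinchine_signMoment {p : ℝ} (hp : 0 < p) :
    ∃ A B : ℝ, 0 < A ∧ A ≤ B ∧ ∀ (m : ℕ) (c : Fin m → ℂ),
      A * (∑ j, ‖c j‖ ^ 2) ^ (p / 2) ≤ signMoment p c ∧
        signMoment p c ≤ B * (∑ j, ‖c j‖ ^ 2) ^ (p / 2) := by
  have hM := evenMomentBound_nonneg
  refine ⟨(1 + evenMomentBound 2)⁻¹, 1 + evenMomentBound ⌈p / 2⌉₊, inv_pos.2 (by linarith [hM 2]),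
    (inv_le_one_of_one_le₀ (by linarith [hM 2])).trans (by linarith [hM ⌈p / 2⌉₊]),
    fun m c => ?_⟩
  by_cases hc : ∑ j, ‖c j‖ ^ 2 = 0
  · simp [hc, signMoment_of_sum_sq_eq_zero hp.ne' hc, Real.zero_rpow (by positivity : p / 2 ≠ 0)]
  obtain ⟨c', hc', hmul⟩ := exists_signMoment_eq_mul p hc
  have hpk : p ≤ 2 * ⌈p / 2⌉₊ := by linarith [Nat.le_ceil (p / 2)]
  rw [hmul, mul_comm _ (signMoment p c')]
  exact ⟨by gcongr; exact inv_one_add_evenMomentBound_le_signMoment c' hc' hp,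
    by gcongr; exact signMoment_le_one_add_evenMomentBound c' hc'.le hp.le hpk⟩

/-- Khinchine's inequality. -/
theorem stmt_19 (p : ℝ) (hp : 0 < p) :
    ∃ A B : ℝ, 0 < A ∧ A ≤ B ∧ ∀ (m : ℕ) (c : Fin m → ℂ),
      A * (∑ j, ‖c j‖ ^ 2) ^ (p / 2) ≤
        (∫ t in (0 : ℝ)..1,
          ‖∑ j : Fin m, c j * ((rademacher (j.val + 1) t : ℝ) : ℂ)‖ ^ p) ∧
      (∫ t in (0 : ℝ)..1,
          ‖∑ j : Fin m, c j * ((rademacher (j.val + 1) t : ℝ) : ℂ)‖ ^ p) ≤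
        B * (∑ j, ‖c j‖ ^ 2) ^ (p / 2) := by
  obtain ⟨A, B, hA, hAB, hbounds⟩ := khinchine_signMoment hp
  refine ⟨A, B, hA, hAB, fun m c => ?_⟩
  have hF : Continuous fun v : Fin m → ℝ => ‖∑ j, v j • c j‖ ^ p :=
    (continuous_finsetSum _ fun j _ => (continuous_apply j).smul continuous_const).norm.rpow_const
      fun _ => Or.inr hp.le
  have hint : ∫ t in (0 : ℝ)..1, ‖∑ j : Fin m, c j * ((rademacher (j.val + 1) t : ℝ) : ℂ)‖ ^ p =
      signMoment p c := by
    simp_rw [mul_comm (c _), ← Complex.real_smul]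
    exact integral_comp_rademacher_succ hF
  rw [hint]
  exact hbounds m c
end
end
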